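/- Let Σ_A(ℕ) be a topologically mixing, finitely primitive (BIP) countable Markov shift and let f : Σ_A(ℕ) → ℝ satisfy the Walters condition with Var_1 f < ∞ and P(f) < ∞. Then Σ_{i∈ℕ, [i]≠∅} exp(sup f|_{[i]}) < ∞. In particular f is bounded above and coercive, i.e. lim_{i→∞} sup f|_{[i]} = −∞. -/

import Mathlib

open Filter Topology MeasureTheory
open scoped ENNReal

/-- The countable Markov shift over alphabet ℕ determined by the 0-1 matrix `A`. -/
def MarkovShift (A : ℕ → ℕ → Bool) : Type :=
  {x : ℕ → ℕ // ∀ i, A (x i) (x (i + 1)) = true}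

namespace MarkovShift

variable {A : ℕ → ℕ → Bool}

instance : TopologicalSpace (MarkovShift A) :=
  instTopologicalSpaceSubtype

instance : MeasurableSpace (MarkovShift A) := borel _

instance : BorelSpace (MarkovShift A) := ⟨rfl⟩

/-- The shift map. -/
def shift (x : MarkovShift A) : MarkovShift A :=
  ⟨fun n => x.1 (n + 1), fun i => x.2 (i + 1)⟩

/-- The cylinder set determined by a finite word. -/
def cylinder (w : List ℕ) : Set (MarkovShift A) :=
  {x | ∀ i : Fin w.length, x.1 i = w.get i}

/-- The cylinder set determined by the first `m` coordinates of `x`. -/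
def cylOf (x : MarkovShift A) (m : ℕ) : Set (MarkovShift A) :=
  {y | ∀ i < m, y.1 i = x.1 i}

/-- A symbol is admissible when its cylinder is nonempty. -/
def Admissible (A : ℕ → ℕ → Bool) (a : ℕ) : Prop :=
  ∃ x : MarkovShift A, x.1 0 = a

/-- Topologically mixing. -/
def TopologicallyMixing (A : ℕ → ℕ → Bool) : Prop :=
  ∀ a b : ℕ, Admissible A a → Admissible A b →
    ∃ N : ℕ, ∀ n ≥ N, ∃ x : MarkovShift A, x.1 0 = a ∧ (shift^[n] x).1 0 = b

/-- Finitely primitive (BIP). -/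
def FinitelyPrimitive (A : ℕ → ℕ → Bool) : Prop :=
  ∃ (K₀ : ℕ) (F : Finset ℕ), ∀ a b : ℕ, Admissible A a → Admissible A b →
    ∃ w : List ℕ, w.length = K₀ ∧ (∀ c ∈ w, c ∈ F) ∧
      List.Chain' (fun u v => A u v = true) (a :: (w ++ [b]))

/-- First coordinate where two distinct points disagree. -/
noncomputable def firstDiff (x y : MarkovShift A) (h : x ≠ y) : ℕ :=
  Nat.find (Function.ne_iff.mp (fun hxy : x.1 = y.1 => h (Subtype.ext hxy)))

open Classical in
/-- The metric `d(x,y) = r^{t(x,y)}`. -/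
noncomputable def dist' (r : ℝ) (x y : MarkovShift A) : ℝ :=
  if h : x = y then 0 else r ^ firstDiff x y h

/-- Birkhoff sum `S_n f`. -/
def birkhoff (f : MarkovShift A → ℝ) (n : ℕ) (x : MarkovShift A) : ℝ :=
  ∑ j ∈ Finset.range n, f (shift^[j] x)

/-- The set of values `|S_n f x - S_n f y|` over pairs agreeing on the first `m` coordinates. -/
def varSet (f : MarkovShift A → ℝ) (n m : ℕ) : Set ℝ :=
  {c | ∃ x y : MarkovShift A, (∀ i < m, x.1 i = y.1 i) ∧ c = |birkhoff f n x - birkhoff f n y|}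

/-- `Var_m (S_n f)`. -/
noncomputable def varBirk (f : MarkovShift A → ℝ) (n m : ℕ) : ℝ := sSup (varSet f n m)

/-- `Var_1 f < ∞`. -/
def Var1Finite (f : MarkovShift A → ℝ) : Prop := BddAbove (varSet f 1 1)

/-- The set whose supremum is `sup_{n ≥ 1} Var_{n+k}(S_n f)`. -/
def waltersSet (f : MarkovShift A → ℝ) (k : ℕ) : Set ℝ :=
  {c | ∃ n, 1 ≤ n ∧ c ∈ varSet f n (n + k)}

/-- `M_k = sup_{n ≥ 1} Var_{n+k}(S_n f)`. -/
noncomputable def waltersSup (f : MarkovShift A → ℝ) (k : ℕ) : ℝ := sSup (waltersSet f k)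

/-- The Walters condition. -/
def SatisfiesWalters (f : MarkovShift A → ℝ) : Prop :=
  (∀ k, 1 ≤ k → BddAbove (waltersSet f k)) ∧
    Tendsto (fun k => waltersSup f k) atTop (𝓝 0)

/-- The partition function `Z_n(f,a) = Σ_{σ^n x = x, x₀ = a} e^{S_n f (x)}`. -/
noncomputable def partitionSum (f : MarkovShift A → ℝ) (n : ℕ) (a : ℕ) : ℝ :=
  ∑' x : {x : MarkovShift A // shift^[n] x = x ∧ x.1 0 = a}, Real.exp (birkhoff f n x.1)

/-- `f` has (finite) Gurevich pressure `p`. -/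
def HasGurevichPressure (f : MarkovShift A → ℝ) (p : ℝ) : Prop :=
  ∀ a : ℕ, Admissible A a →
    (∀ n, 1 ≤ n → Summable fun x : {x : MarkovShift A // shift^[n] x = x ∧ x.1 0 = a} =>
        Real.exp (birkhoff f n x.1)) ∧
    Tendsto (fun n : ℕ => (1 / (n : ℝ)) * Real.log (partitionSum f n a)) atTop (𝓝 p)

/-- σ-invariant Borel probability measure. -/
def IsInvariantProb (μ : Measure (MarkovShift A)) : Prop :=
  IsProbabilityMeasure μ ∧ μ.map shift = μ

/-- `m(f)`, the maximal ergodic average. -/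
noncomputable def mf (f : MarkovShift A → ℝ) : ℝ :=
  sSup {c | ∃ μ : Measure (MarkovShift A),
    IsInvariantProb μ ∧ Integrable f μ ∧ ∫ x, f x ∂μ = c}

/-- A maximizing measure for `f`. -/
def IsMaximizing (f : MarkovShift A → ℝ) (μ : Measure (MarkovShift A)) : Prop :=
  IsInvariantProb μ ∧ Integrable f μ ∧ ∫ x, f x ∂μ = mf f

/-- Bounded real valued function. -/
def BoundedFun (g : MarkovShift A → ℝ) : Prop := ∃ C, ∀ x, |g x| ≤ C

/-- A bounded calibrated sub-action for `f`. -/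
def IsCalibratedSubaction (f V : MarkovShift A → ℝ) : Prop :=
  Continuous V ∧ BoundedFun V ∧
    (∀ x, f x + V x - V (shift x) - mf f ≤ 0) ∧
    (∀ y, ∃ x, shift x = y ∧ f x + V x - V (shift x) - mf f = 0)

/-- The Ruelle transfer operator `(L_g u)(x) = Σ_{σ y = x} e^{g(y)} u(y)`. -/
noncomputable def ruelle (g u : MarkovShift A → ℝ) (x : MarkovShift A) : ℝ :=
  ∑' y : {y : MarkovShift A // shift y = x}, Real.exp (g y.1) * u y.1

/-- Ruelle-Perron-Frobenius data for the potential `f` with pressure `p`: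
eigenfunction `h`, eigenmeasure `ν`. -/
def IsRPF (f : MarkovShift A → ℝ) (p : ℝ) (h : MarkovShift A → ℝ)
    (ν : Measure (MarkovShift A)) : Prop :=
  Continuous h ∧ (∀ x, 0 < h x) ∧
    (∀ x, ruelle f h x = Real.exp p * h x) ∧
    IsProbabilityMeasure ν ∧
    (∀ g : MarkovShift A → ℝ, Continuous g → BoundedFun g →
      ∫ x, ruelle f g x ∂ν = Real.exp p * ∫ x, g x ∂ν) ∧
    ∫ x, h x ∂ν = 1

/-- The Gibbs measure `dμ = h dν`. -/
noncomputable def gibbs (h : MarkovShift A → ℝ) (ν : Measure (MarkovShift A)) :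
    Measure (MarkovShift A) :=
  ν.withDensity fun x => ENNReal.ofReal (h x)

/-- The Mañé potential `S_f(x,y)` (with respect to the metric of parameter `r`). -/
noncomputable def manePot (r : ℝ) (f : MarkovShift A → ℝ) (x y : MarkovShift A) : EReal :=
  ⨅ ε : {ε : ℝ // 0 < ε}, ⨆ n : {n : ℕ // 1 ≤ n},
    ⨆ _z : {z : MarkovShift A // dist' r x z < ε.1 ∧ shift^[n.1] z = y},
      ((birkhoff (fun w => f w - mf f) n.1 _z.1 : ℝ) : EReal)

/-- The (topological) support of a measure. -/
def msupport (μ : Measure (MarkovShift A)) : Set (MarkovShift A) :=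
  {x | ∀ U : Set (MarkovShift A), IsOpen U → x ∈ U → 0 < μ U}

end MarkovShift

/-! Fix an admissible symbol `a`. BIP gives, for every admissible `i`, a periodic orbit `y_i` of
one fixed period `N` that starts at `a`, visits `i` at one fixed time and otherwise stays in a
fixed finite set of symbols. Bounded `Var₁ f` keeps `f` within a constant of its supremum on each
cylinder and bounded below on finitely many cylinders, so `exp (sup f|[i]) ≤ C · exp (S_N f (y_i))`.
The `y_i` are distinct fixed points of `σ^N` in `[a]`, hence the sum over `i` is dominated by the
partition function `Z_N(f, a)`, which is finite since `P(f) < ∞`. -/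

namespace MarkovShift

variable {A : ℕ → ℕ → Bool}

lemma shift_iterate_apply (m : ℕ) (x : MarkovShift A) (j : ℕ) :
    (shift^[m] x).1 j = x.1 (j + m) := by
  induction m generalizing x j with
  | zero => rfl
  | succ m ih => rw [Function.iterate_succ_apply, ih]; rfl

lemma exists_periodic_of_isChain {l : List ℕ} (hl : 0 < l.length)
    (h : List.IsChain (fun u v => A u v = true) (l ++ [l[0]])) :
    ∃ x : MarkovShift A, shift^[l.length] x = x ∧ ∀ n (hn : n < l.length), x.1 n = l[n] := by
  let u : ℕ → ℕ := fun n => l[n % l.length]'(Nat.mod_lt _ hl)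
  have hper : Function.Periodic u l.length := fun n => by simp [u]
  have hcycle : ∀ k (hk : k ≤ l.length), (l ++ [l[0]])[k]'(by simp; omega) = u k := by
    intro k hk
    rcases hk.lt_or_eq with hk | rfl
    · simp [u, List.getElem_append_left hk, Nat.mod_eq_of_lt hk]
    · simp [u]
  have hstep : ∀ n < l.length, A (u n) (u (n + 1)) = true := by
    intro n hn
    have hedge := List.isChain_iff_getElem.mp h n (by simp; omega)
    rwa [hcycle n hn.le, hcycle (n + 1) hn] at hedge
  have hadm : ∀ n, A (u n) (u (n + 1)) = true := fun n => by
    have := hstep (n % l.length) (Nat.mod_lt _ hl)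
    rwa [hper.map_mod_nat, ← hper.map_mod_nat (n % l.length + 1), Nat.mod_add_mod,
      hper.map_mod_nat] at this
  refine ⟨⟨u, hadm⟩, Subtype.ext (funext fun j => (shift_iterate_apply _ _ _).trans (hper j)),
    fun n hn => ?_⟩
  exact getElem_congr_idx (Nat.mod_eq_of_lt hn)

lemma exists_periodic_through (hbip : FinitelyPrimitive A) {a : ℕ} (ha : Admissible A a) :
    ∃ (N k : ℕ) (F : Finset ℕ), k < N ∧ ∀ i, Admissible A i → ∃ x : MarkovShift A,
      shift^[N] x = x ∧ x.1 0 = a ∧ x.1 k = i ∧ ∀ j < N, j ≠ k → x.1 j ∈ F := by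
  obtain ⟨K, F, hF⟩ := hbip
  refine ⟨2 * K + 2, K + 1, insert a F, by omega, fun i hi => ?_⟩
  obtain ⟨w₁, hw₁, hw₁F, hc₁⟩ := hF a i ha hi
  obtain ⟨w₂, hw₂, hw₂F, hc₂⟩ := hF i a hi ha
  set l := a :: (w₁ ++ i :: w₂)
  have hlen : l.length = 2 * K + 2 := by simp [l, hw₁, hw₂]; omega
  have hchain : List.IsChain (fun u v => A u v = true) (l ++ [l[0]'(by simp [l])]) := by
    have h := List.IsChain.append_overlap (l₁ := a :: w₁) (l₂ := [i]) (l₃ := w₂ ++ [a])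
      hc₁ hc₂ (by simp)
    convert h using 1
    simp [l]
  obtain ⟨x, hper, hx⟩ := exists_periodic_of_isChain (by simp [l]) hchain
  refine ⟨x, hlen ▸ hper, hx 0 (by simp [l]), ?_, fun j hj hjk => ?_⟩
  · rw [hx (K + 1) (by omega)]
    simp [l, List.getElem_append_right, hw₁]
  · rw [hx j (by omega)]
    rcases j with _ | j
    · simp [l]
    simp only [l, List.getElem_cons_succ, List.getElem_append]
    split_ifs with hjK
    · exact Finset.mem_insert_of_mem (hw₁F _ (List.getElem_mem _))
    · obtain ⟨m, hm⟩ : ∃ m, j - w₁.length = m + 1 := ⟨j - K - 1, by omega⟩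
      simp only [hm, List.getElem_cons_succ]
      exact Finset.mem_insert_of_mem (hw₂F _ (List.getElem_mem _))

noncomputable def symbolSup (f : MarkovShift A → ℝ) (i : ℕ) : ℝ := sSup (f '' {x | x.1 0 = i})

section Var1Finite

variable {f : MarkovShift A → ℝ} (hf : Var1Finite f)
include hf

lemma le_add_varBirk_of_head_eq {x y : MarkovShift A} (h : x.1 0 = y.1 0) :
    f x ≤ f y + varBirk f 1 1 := by
  have hmem : |f x - f y| ∈ varSet f 1 1 :=
    ⟨x, y, fun i hi => by rwa [Nat.lt_one_iff.mp hi], by simp [birkhoff]⟩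
  have hle : |f x - f y| ≤ varBirk f 1 1 := le_csSup hf hmem
  linarith [le_abs_self (f x - f y)]

lemma symbolSup_le_add_varBirk {x : MarkovShift A} {i : ℕ} (hx : x.1 0 = i) :
    symbolSup f i ≤ f x + varBirk f 1 1 :=
  csSup_le ⟨f x, x, hx, rfl⟩ <| by
    rintro _ ⟨y, hy, rfl⟩
    exact le_add_varBirk_of_head_eq hf (hy.trans hx.symm)

lemma le_symbolSup (x : MarkovShift A) : f x ≤ symbolSup f (x.1 0) :=
  le_csSup ⟨f x + varBirk f 1 1, by
    rintro _ ⟨y, hy, rfl⟩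
    exact le_add_varBirk_of_head_eq hf hy⟩ ⟨x, rfl, rfl⟩

lemma bddBelow_image_head_eq (c : ℕ) : BddBelow (f '' {x | x.1 0 = c}) := by
  rcases em (∃ y : MarkovShift A, y.1 0 = c) with ⟨y, hy⟩ | hc
  · refine ⟨f y - varBirk f 1 1, ?_⟩
    rintro _ ⟨x, hx, rfl⟩
    linarith [le_add_varBirk_of_head_eq hf (hy.trans hx.symm)]
  · exact ⟨0, by rintro _ ⟨x, hx, rfl⟩; exact (hc ⟨x, hx⟩).elim⟩

lemma exists_le_of_head_mem (F : Finset ℕ) :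
    ∃ m, ∀ x : MarkovShift A, x.1 0 ∈ F → m ≤ f x := by
  obtain ⟨m, hm⟩ := F.finite_toSet.bddBelow_biUnion.2 fun c _ => bddBelow_image_head_eq hf c
  exact ⟨m, fun x hx => hm (Set.mem_biUnion (x := x.1 0) hx ⟨x, rfl, rfl⟩)⟩

lemma symbolSup_add_le_birkhoff {N k : ℕ} {F : Finset ℕ} {m : ℝ}
    (hm : ∀ x : MarkovShift A, x.1 0 ∈ F → m ≤ f x) (hk : k < N) {x : MarkovShift A}
    (hx : ∀ j < N, j ≠ k → x.1 j ∈ F) :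
    symbolSup f (x.1 k) - varBirk f 1 1 + (N - 1 : ℕ) * m ≤ birkhoff f N x := by
  have hkN : k ∈ Finset.range N := Finset.mem_range.2 hk
  rw [birkhoff, ← Finset.add_sum_erase _ _ hkN]
  have hvisit : symbolSup f (x.1 k) - varBirk f 1 1 ≤ f (shift^[k] x) := by
    have hhead : (shift^[k] x).1 0 = x.1 k := by rw [shift_iterate_apply, zero_add]
    linarith [symbolSup_le_add_varBirk hf hhead]
  have hrest : ((N - 1 : ℕ) : ℝ) * m ≤ ∑ j ∈ (Finset.range N).erase k, f (shift^[j] x) := by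
    have := Finset.card_nsmul_le_sum ((Finset.range N).erase k) (fun j => f (shift^[j] x)) m
      fun j hj => hm _ <| by
        rw [shift_iterate_apply, zero_add]
        exact hx j (Finset.mem_range.1 (Finset.mem_of_mem_erase hj))
          (Finset.ne_of_mem_erase hj)
    simpa [Finset.card_erase_of_mem hkN] using this
  linarith

theorem summable_exp_symbolSup (hbip : FinitelyPrimitive A) {a : ℕ} (ha : Admissible A a)
    (hZ : ∀ n, 1 ≤ n → Summable fun x : {x : MarkovShift A // shift^[n] x = x ∧ x.1 0 = a} =>
      Real.exp (birkhoff f n x.1)) :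
    Summable fun i : {i : ℕ // Admissible A i} => Real.exp (symbolSup f i) := by
  obtain ⟨N, k, F, hk, hloop⟩ := exists_periodic_through hbip ha
  choose y hyper hy0 hyk hyF using fun i : {i : ℕ // Admissible A i} => hloop i i.2
  obtain ⟨m, hm⟩ := exists_le_of_head_mem hf F
  have hinj : Function.Injective fun i =>
      (⟨y i, hyper i, hy0 i⟩ : {x : MarkovShift A // shift^[N] x = x ∧ x.1 0 = a}) :=
    fun i j hij => Subtype.ext <|
      (hyk i).symm.trans ((congrArg (fun z => z.1.1 k) hij).trans (hyk j))
  refine .of_nonneg_of_le (fun _ => (Real.exp_pos _).le) (fun i => ?_)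
    (((hZ N (by omega)).comp_injective hinj).mul_left
      (Real.exp (varBirk f 1 1 - (N - 1 : ℕ) * m)))
  have hbirk := symbolSup_add_le_birkhoff hf hm hk (hyF i)
  rw [hyk i] at hbirk
  rw [Function.comp_apply, ← Real.exp_add, Real.exp_le_exp]
  linarith

end Var1Finite

lemma le_log_tsum_exp {ι : Type*} {g : ι → ℝ} (hg : Summable fun i => Real.exp (g i)) (i : ι) :
    g i ≤ Real.log (∑' j, Real.exp (g j)) :=
  (Real.log_exp (g i)).symm.le.trans
    (Real.log_le_log (Real.exp_pos _) (hg.le_tsum i fun _ _ => (Real.exp_pos _).le))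

lemma exists_forall_ge_le_of_summable_exp {P : ℕ → Prop} {g : ℕ → ℝ}
    (hg : Summable fun i : {i // P i} => Real.exp (g i)) (M : ℝ) :
    ∃ N, ∀ i ≥ N, P i → g i ≤ M := by
  have h0 := (summable_subtype_iff_indicator (f := fun i => Real.exp (g i)) (s := {i | P i}).mp
    hg).tendsto_atTop_zero
  obtain ⟨N, hN⟩ := eventually_atTop.mp (h0.eventually_lt_const (Real.exp_pos M))
  refine ⟨N, fun i hi hPi => ?_⟩
  have := hN i hi
  rw [Set.indicator_of_mem (s := {i | P i}) hPi] at this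
  exact (Real.exp_lt_exp.mp this).le

theorem summable_exp_sup_on_cylinders_general
    (A : ℕ → ℕ → Bool)
    (hbip : FinitelyPrimitive A)
    (f : MarkovShift A → ℝ)
    (hVar1 : Var1Finite f)
    (p : ℝ)
    (hPfin : HasGurevichPressure f p) :
    (Summable fun i : {i : ℕ // Admissible A i} =>
        Real.exp (sSup (f '' {x : MarkovShift A | x.1 0 = i.1}))) ∧
      (∃ M : ℝ, ∀ x : MarkovShift A, f x ≤ M) ∧
      (∀ M : ℝ, ∃ N : ℕ, ∀ i ≥ N, Admissible A i →
        sSup (f '' {x : MarkovShift A | x.1 0 = i}) ≤ M) := by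
  have hsum : Summable fun i : {i : ℕ // Admissible A i} => Real.exp (symbolSup f i) := by
    rcases isEmpty_or_nonempty {i : ℕ // Admissible A i} with h | ⟨a, ha⟩
    · exact summable_empty
    · exact summable_exp_symbolSup hVar1 hbip ha (hPfin a ha).1
  exact ⟨hsum,
    ⟨_, fun x => (le_symbolSup hVar1 x).trans (le_log_tsum_exp hsum ⟨x.1 0, x, rfl⟩)⟩,
    exists_forall_ge_le_of_summable_exp hsum⟩

/-- Summability of `exp(sup f|_[i])` over admissible symbols; in particular `f` is
bounded above and coercive. -/
theorem summable_exp_sup_on_cylinders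
    (A : ℕ → ℕ → Bool)
    (hmix : TopologicallyMixing A)
    (hbip : FinitelyPrimitive A)
    (f : MarkovShift A → ℝ)
    (hWalters : SatisfiesWalters f)
    (hVar1 : Var1Finite f)
    (p : ℝ)
    (hPfin : HasGurevichPressure f p) :
    (Summable fun i : {i : ℕ // Admissible A i} =>
        Real.exp (sSup (f '' {x : MarkovShift A | x.1 0 = i.1}))) ∧
      (∃ M : ℝ, ∀ x : MarkovShift A, f x ≤ M) ∧
      (∀ M : ℝ, ∃ N : ℕ, ∀ i ≥ N, Admissible A i →
        sSup (f '' {x : MarkovShift A | x.1 0 = i}) ≤ M) :=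
  summable_exp_sup_on_cylinders_general A hbip f hVar1 p hPfin

end MarkovShift
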